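/- arXiv:1611.04098 — 2 statements merged into one kernel-verified Lean document; each statement's English description precedes it below -/
import Mathlib

section
/- Let (W,S) be a Coxeter system with finite index set B, let w ∈ W and let s = s i be a simple reflection with ℓ(w * s) > ℓ(w). Then for every n : ℕ, the number of lazy walks of length n from the identity to w * s is at most the number of lazy walks of length n from the identity to w: N n (w * s) ≤ N n w. -/
/-!
Split walks at their first step: `N (n+1) y = ∑ₐ N n (step a * y)`. Let `t` be a reflection and
`ℓ x < ℓ (x * t)`. A first step `s j` keeps `s j * x` on the identity side of the wall of `t`
unless `s j = x t x⁻¹`, and that crossing step swaps `x` and `x * t`; pairing it with the lazy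
step, the inequality `N n (x * t) ≤ N n x` propagates from `n` to `n + 1`. The wall-crossing
criterion comes from Tits' reflection cocycle (the parity of the number of occurrences of a
reflection in an inversion sequence), and the uniqueness of the crossing step from the
injectivity of `s`, which the geometric representation provides.
-/

/-- The number of lazy walks of length `n` (each step an element of `Option B`,
interpreted as `1` for `none` and the simple reflection `cs.simple i` for `some i`)
whose steps multiply, in order, to `w`. -/
noncomputable def lazyWalkCount {B W : Type*} [Group W] {M : CoxeterMatrix B}
    (cs : CoxeterSystem M W) (n : ℕ) (w : W) : ℕ :=
  Nat.card {f : Fin n → Option B //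
    (List.ofFn fun j => ((f j).elim 1 cs.simple)).prod = w}

section GeometricRepresentation

open Polynomial Chebyshev Real

namespace Polynomial.Chebyshev

theorem S_eval_two_mul_cos_pi_div_sub_one {k : ℕ} (hk : 2 ≤ k) :
    (S ℝ (k - 1)).eval (2 * cos (π / k)) = 0 := by
  have hsin : sin (π / k) ≠ 0 := by
    apply (sin_pos_of_pos_of_lt_pi (by positivity) _).ne'
    exact div_lt_self pi_pos (by exact_mod_cast hk)
  have h := S_two_mul_real_cos (π / k) (k - 1)
  rw [Int.cast_sub, Int.cast_natCast, Int.cast_one, sub_add_cancel,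
    mul_div_cancel₀ _ (by positivity), sin_pi] at h
  exact (mul_eq_zero.mp h).resolve_right hsin

theorem S_eval_add_S_eval_two_mul_cos_two_pi_div {k : ℕ} (hk : 1 ≤ k) :
    (S ℝ k).eval (2 * cos (2 * π / (2 * k + 1))) +
      (S ℝ (k - 1)).eval (2 * cos (2 * π / (2 * k + 1))) = 0 := by
  set φ := 2 * π / (2 * k + 1)
  have hsin : sin φ ≠ 0 := by
    apply (sin_pos_of_pos_of_lt_pi (by positivity) _).ne'
    rw [div_lt_iff₀ (by positivity)]
    have : (1 : ℝ) ≤ k := by exact_mod_cast hk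
    nlinarith [pi_pos]
  have hk1 := S_two_mul_real_cos φ k
  have hk0 := S_two_mul_real_cos φ (k - 1)
  have hφ : ((k : ℝ) + 1) * φ = 2 * π - k * φ := by
    simp only [φ]
    field_simp
    ring
  push_cast at hk1 hk0
  rw [hφ, sin_two_pi_sub] at hk1
  rw [sub_add_cancel] at hk0
  apply (mul_eq_zero.mp _).resolve_right hsin
  linear_combination hk1 + hk0

end Polynomial.Chebyshev

namespace Module

variable {V : Type*} [AddCommGroup V] [Module ℝ V] {x y : V} {f g : Dual ℝ V}

theorem reflection_mul_reflection_pow_eq_one (hf : f x = 2) (hg : g y = 2) {m : ℕ} (hm : 3 ≤ m)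
    (hfg : f y * g x = 4 * cos (π / m) ^ 2) : (reflection hf * reflection hg) ^ m = 1 := by
  have ht : 2 * cos (2 * π / m) = f y * g x - 2 := by
    rw [hfg, mul_div_assoc, cos_two_mul]
    ring
  ext z
  rw [reflection_mul_reflection_pow_apply hf hg m z _ ht]
  obtain ⟨k, rfl | rfl⟩ := Nat.even_or_odd' m
  · push_cast
    rw [mul_div_mul_left _ _ two_ne_zero, show (2 * (k : ℤ) - 2) / 2 = k - 1 by omega,
      show (2 * (k : ℤ) - 1) / 2 = k - 1 by omega,
      S_eval_two_mul_cos_pi_div_sub_one (by omega)]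
    simp
  · push_cast
    rw [show (2 * (k : ℤ) + 1 - 2) / 2 = k - 1 by omega,
      show (2 * (k : ℤ) + 1 - 1) / 2 = k by omega,
      show (2 * (k : ℤ) + 1 - 3) / 2 = k - 1 by omega, show (2 * (k : ℤ) + 1) / 2 = k by omega,
      S_eval_add_S_eval_two_mul_cos_two_pi_div (by omega)]
    simp

theorem reflection_mul_reflection_pow_two_eq_one (hf : f x = 2) (hg : g y = 2) (hfy : f y = 0)
    (hgx : g x = 0) : (reflection hf * reflection hg) ^ 2 = 1 := by
  ext z
  simp [pow_two, reflection_apply, hf, hg, hfy, hgx]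
  module

end Module

namespace CoxeterMatrix

variable {B : Type*} (M : CoxeterMatrix B)

/-- `v ↦ 2 B(α_p, v)` for the form `B(α_p, α_q) = -cos (π / M p q)`; when `M p q = 0`
(no relation) the junk value `π / 0 = 0` gives `B(α_p, α_q) = -1`, the correct value. -/
noncomputable def coroot (p : B) : Module.Dual ℝ (B →₀ ℝ) :=
  Finsupp.linearCombination ℝ fun q => -2 * cos (π / M p q)

theorem coroot_single (p q : B) : M.coroot p (Finsupp.single q 1) = -2 * cos (π / M p q) := by
  simp [coroot]

theorem coroot_single_self (p : B) : M.coroot p (Finsupp.single p 1) = 2 := by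
  simp [coroot_single]

noncomputable def geometricReflection (p : B) : (B →₀ ℝ) ≃ₗ[ℝ] (B →₀ ℝ) :=
  Module.reflection (M.coroot_single_self p)

theorem isLiftable_geometricReflection : M.IsLiftable M.geometricReflection := by
  intro p q
  by_cases hpq : p = q
  · subst hpq
    rw [M.diagonal, pow_one]
    exact mul_eq_one_iff_eq_inv.mpr (Module.reflection_inv _).symm
  have hsymm : M.coroot q (Finsupp.single p 1) = M.coroot p (Finsupp.single q 1) := by
    rw [coroot_single, coroot_single, M.symmetric]
  obtain h0 | h2 | h3 : M p q = 0 ∨ M p q = 2 ∨ 3 ≤ M p q := by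
    have := M.off_diagonal p q hpq
    omega
  · rw [h0, pow_zero]
  · have hzero : M.coroot p (Finsupp.single q 1) = 0 := by
      rw [coroot_single, h2, Nat.cast_ofNat, cos_pi_div_two, mul_zero]
    rw [h2]
    exact Module.reflection_mul_reflection_pow_two_eq_one _ _ hzero (hsymm.trans hzero)
  · apply Module.reflection_mul_reflection_pow_eq_one _ _ h3
    rw [hsymm, coroot_single]
    ring

end CoxeterMatrix

theorem CoxeterSystem.simple_injective {B W : Type*} [Group W] {M : CoxeterMatrix B}
    (cs : CoxeterSystem M W) : Function.Injective cs.simple := by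
  intro p q hpq
  by_contra hne
  have h := congrArg (cs.lift ⟨_, M.isLiftable_geometricReflection⟩) hpq
  rw [cs.lift_apply_simple, cs.lift_apply_simple] at h
  have := congrArg (fun r => r (Finsupp.single p 1) p) h
  norm_num [CoxeterMatrix.geometricReflection, Module.reflection_apply, hne] at this

end GeometricRepresentation

namespace CoxeterSystem

open List

variable {B W : Type*} [Group W] {M : CoxeterMatrix B} (cs : CoxeterSystem M W)

local prefix:100 "s " => cs.simple
local prefix:100 "π " => cs.wordProd
local prefix:100 "ℓ " => cs.length
local prefix:100 "lis " => cs.leftInvSeq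

theorem prod_map_alternatingWord_two_mul {G : Type*} [Monoid G] (f : B → G) (i i' : B) (p : ℕ) :
    ((alternatingWord i i' (2 * p)).map f).prod = (f i * f i') ^ p := by
  induction p with
  | zero => simp [alternatingWord]
  | succ p ih =>
    rw [show 2 * (p + 1) = 2 * p + 1 + 1 by ring, alternatingWord_succ', alternatingWord_succ']
    simp [ih, pow_succ', mul_assoc]

theorem leftInvSeq_alternatingWord_drop_eq_take (i i' : B) :
    (lis (alternatingWord i i' (2 * M i i'))).drop (M i i') =
      (lis (alternatingWord i i' (2 * M i i'))).take (M i i') := by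
  apply List.ext_getElem (by simp; omega)
  intro k hk _
  simp only [length_drop, length_leftInvSeq, length_alternatingWord] at hk
  simp only [List.getElem_drop, List.getElem_take]
  rw [getElem_leftInvSeq_alternatingWord _ _ _ _ _ (by omega),
    getElem_leftInvSeq_alternatingWord _ _ _ _ _ (by omega),
    prod_alternatingWord_eq_mul_pow, prod_alternatingWord_eq_mul_pow]
  rw [show (2 * (M i i' + k) + 1) / 2 = M i i' + k by omega, show (2 * k + 1) / 2 = k by omega,
    pow_add, M.symmetric, cs.simple_mul_simple_pow, one_mul]
  simp

section ReflectionCocycle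

open scoped Classical

theorem simple_mul_mul_simple_eq_simple_iff (i : B) (t : W) : s i * t * s i = s i ↔ t = s i := by
  constructor
  · intro h
    simpa [mul_assoc, cs.simple_mul_simple_cancel_left] using congrArg (s i * · * s i) h
  · rintro rfl
    simp [cs.simple_mul_simple_self]

noncomputable def signPerm (i : B) : Equiv.Perm (W × ZMod 2) :=
  Function.Involutive.toPerm (fun x => (s i * x.1 * s i, x.2 + if x.1 = s i then 1 else 0)) <| by
    rintro ⟨t, e⟩
    refine Prod.ext ?_ ?_
    · simp [mul_assoc, cs.simple_mul_simple_cancel_left]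
    · simp only [simple_mul_mul_simple_eq_simple_iff, add_assoc, CharTwo.add_self_eq_zero,
        add_zero]

theorem signPerm_apply (i : B) (t : W) (e : ZMod 2) :
    cs.signPerm i (t, e) = (s i * t * s i, e + if t = s i then 1 else 0) :=
  rfl

theorem prod_map_signPerm_apply (ω : List B) (t : W) (e : ZMod 2) :
    (ω.map cs.signPerm).prod (t, e) =
      (π ω * t * (π ω)⁻¹, e + (lis ω).count (π ω * t * (π ω)⁻¹)) := by
  induction ω with
  | nil => simp
  | cons i ω ih =>
    set u := π ω * t * (π ω)⁻¹
    have hconj : π (i :: ω) * t * (π (i :: ω))⁻¹ = MulAut.conj (s i) u := by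
      simp only [u, wordProd_cons, MulAut.conj_apply, mul_inv_rev, mul_assoc]
    rw [map_cons, prod_cons, Equiv.Perm.mul_apply, ih, signPerm_apply, hconj, leftInvSeq,
      count_cons, count_map_of_injective _ _ (MulAut.conj (s i)).injective]
    simp only [MulAut.conj_apply, inv_simple, beq_iff_eq, eq_comm (a := s i),
      simple_mul_mul_simple_eq_simple_iff]
    push_cast
    rw [add_assoc]

theorem isLiftable_signPerm : M.IsLiftable cs.signPerm := by
  intro i i'
  ext ⟨t, e⟩ : 1
  have hprod : π (alternatingWord i i' (2 * M i i')) = 1 := by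
    rw [prod_alternatingWord_eq_mul_pow, if_pos (even_two_mul _),
      Nat.mul_div_cancel_left _ two_pos, cs.simple_mul_simple_pow, one_mul]
  rw [← prod_map_alternatingWord_two_mul, prod_map_signPerm_apply, hprod,
    ← take_append_drop (M i i') (lis _), leftInvSeq_alternatingWord_drop_eq_take, count_append]
  simpa using CharTwo.add_self_eq_zero _

noncomputable def signRep : W →* Equiv.Perm (W × ZMod 2) :=
  cs.lift ⟨_, cs.isLiftable_signPerm⟩

theorem signRep_wordProd (ω : List B) : cs.signRep (π ω) = (ω.map cs.signPerm).prod := by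
  rw [signRep, wordProd, map_list_prod, map_map]
  congr 2
  funext i
  exact cs.lift_apply_simple _ i

noncomputable def inversionParity (w t : W) : ZMod 2 := (cs.signRep w (t, 0)).2

theorem inversionParity_wordProd (ω : List B) (t : W) :
    cs.inversionParity (π ω) t = (lis ω).count (π ω * t * (π ω)⁻¹) := by
  simp [inversionParity, signRep_wordProd, prod_map_signPerm_apply]

theorem signRep_apply (w t : W) (e : ZMod 2) :
    cs.signRep w (t, e) = (w * t * w⁻¹, e + cs.inversionParity w t) := by
  obtain ⟨ω, rfl⟩ := cs.wordProd_surjective w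
  rw [inversionParity_wordProd, signRep_wordProd, prod_map_signPerm_apply]

theorem inversionParity_mul (a b t : W) :
    cs.inversionParity (a * b) t =
      cs.inversionParity b t + cs.inversionParity a (b * t * b⁻¹) := by
  rw [inversionParity, map_mul, Equiv.Perm.mul_apply, signRep_apply, signRep_apply, zero_add]

theorem inversionParity_one (t : W) : cs.inversionParity 1 t = 0 := by
  simp [inversionParity]

theorem inversionParity_simple (i : B) (t : W) :
    cs.inversionParity (s i) t = if t = s i then 1 else 0 := by
  simp [inversionParity, signRep, lift_apply_simple, signPerm_apply]

theorem inversionParity_eq_zero_of_length_lt {w t : W} (h : ℓ w < ℓ (w * t)) :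
    cs.inversionParity w t = 0 := by
  obtain ⟨ω, hω, rfl⟩ := cs.exists_isReduced w
  have hmem : π ω * t * (π ω)⁻¹ ∉ lis ω := fun hmem => by
    have := (cs.isLeftInversion_of_mem_leftInvSeq hω hmem).2
    rw [inv_mul_cancel_right] at this
    omega
  simp [inversionParity_wordProd, count_eq_zero_of_not_mem hmem]

theorem inversionParity_self {t : W} (ht : cs.IsReflection t) : cs.inversionParity t t = 1 := by
  obtain ⟨w, i, rfl⟩ := ht
  -- expand `w s_i w⁻¹` with the cocycle identity: the two contributions of `w` cancel mod 2
  have e1 : w⁻¹ * (w * s i * w⁻¹) * w⁻¹⁻¹ = s i := by group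
  have e2 : s i * s i * (s i)⁻¹ = s i := by group
  have h1 := cs.inversionParity_mul (w * s i) w⁻¹ (w * s i * w⁻¹)
  have h2 := cs.inversionParity_mul w w⁻¹ (w * s i * w⁻¹)
  have h3 := cs.inversionParity_mul w (s i) (s i)
  rw [e1] at h1 h2
  rw [mul_inv_cancel, inversionParity_one] at h2
  rw [e2, inversionParity_simple, if_pos rfl] at h3
  linear_combination h1 - h2 + h3

theorem inversionParity_eq_one_of_length_lt {w t : W} (ht : cs.IsReflection t)
    (h : ℓ (w * t) < ℓ w) : cs.inversionParity w t = 1 := by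
  have h0 : cs.inversionParity (w * t) t = 0 :=
    cs.inversionParity_eq_zero_of_length_lt (by rwa [mul_assoc, ht.mul_self, mul_one])
  have := cs.inversionParity_mul (w * t) t t
  rw [mul_inv_cancel_right, mul_assoc, ht.mul_self, mul_one] at this
  rw [this, h0, inversionParity_self cs ht, add_zero]

theorem length_simple_mul_lt_length_simple_mul_mul {x t : W} (ht : cs.IsReflection t)
    (h : ℓ x < ℓ (x * t)) {j : B} (hj : x * t * x⁻¹ ≠ s j) :
    ℓ (s j * x) < ℓ (s j * x * t) := by
  have h0 : cs.inversionParity (s j * x) t = 0 := by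
    rw [inversionParity_mul, cs.inversionParity_eq_zero_of_length_lt h, inversionParity_simple,
      if_neg hj, add_zero]
  refine (lt_or_gt_of_ne (ht.length_mul_left_ne (s j * x))).resolve_left fun hlt => ?_
  have h1 := cs.inversionParity_eq_one_of_length_lt ht hlt
  rw [h0] at h1
  exact zero_ne_one h1

end ReflectionCocycle

end CoxeterSystem

section LazyWalk

variable {B W : Type*} [Group W] {M : CoxeterMatrix B} (cs : CoxeterSystem M W)

local prefix:100 "s " => cs.simple
local prefix:100 "ℓ " => cs.length

theorem option_elim_simple_mul_self (a : Option B) :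
    a.elim 1 cs.simple * a.elim 1 cs.simple = 1 := by
  cases a <;> simp [cs.simple_mul_simple_self]

theorem lazyWalkCount_zero_of_ne_one {w : W} (hw : w ≠ 1) : lazyWalkCount cs 0 w = 0 := by
  rw [lazyWalkCount, Nat.card_eq_zero]
  left
  constructor
  rintro ⟨f, hf⟩
  exact hw (by simpa using hf.symm)

theorem lazyWalkCount_succ [Fintype B] (n : ℕ) (w : W) :
    lazyWalkCount cs (n + 1) w = ∑ a : Option B, lazyWalkCount cs n (a.elim 1 cs.simple * w) := by
  have hfirst (a : Option B) (g : Fin n → Option B) :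
      (List.ofFn fun j => (g j).elim 1 cs.simple).prod = a.elim 1 cs.simple * w ↔
        (List.ofFn fun j => ((Fin.cons a g : Fin (n + 1) → Option B) j).elim 1 cs.simple).prod =
          w := by
    rw [List.ofFn_succ, List.prod_cons, Fin.cons_zero]
    simp only [Fin.cons_succ]
    constructor
    · intro h
      rw [h, ← mul_assoc, option_elim_simple_mul_self, one_mul]
    · intro h
      rw [← h, ← mul_assoc, option_elim_simple_mul_self, one_mul]
  rw [lazyWalkCount, ← Nat.card_congr ((Fin.consEquiv fun _ => Option B).subtypeEquiv
      fun x => hfirst x.1 x.2),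
    Nat.card_congr (Equiv.subtypeProdEquivSigmaSubtype
      fun (a : Option B) (g : Fin n → Option B) =>
        (List.ofFn fun j => (g j).elim 1 cs.simple).prod = a.elim 1 cs.simple * w),
    Nat.card_sigma]
  rfl

theorem lazyWalkCount_mul_reflection_le [Fintype B] {t : W} (ht : cs.IsReflection t) (n : ℕ)
    {x : W} (h : ℓ x < ℓ (x * t)) : lazyWalkCount cs n (x * t) ≤ lazyWalkCount cs n x := by
  classical
  induction n generalizing x with
  | zero =>
    have hxt : x * t ≠ 1 := fun h1 => by simp [h1] at h
    rw [lazyWalkCount_zero_of_ne_one cs hxt]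
    exact Nat.zero_le _
  | succ n ih =>
    rw [lazyWalkCount_succ, lazyWalkCount_succ]
    have noncrossing (j : B) (hj : x * t * x⁻¹ ≠ s j) :
        lazyWalkCount cs n (s j * (x * t)) ≤ lazyWalkCount cs n (s j * x) := by
      rw [← mul_assoc]
      exact ih (cs.length_simple_mul_lt_length_simple_mul_mul ht h hj)
    by_cases hcross : ∃ j₀, x * t * x⁻¹ = s j₀
    · obtain ⟨j₀, hj₀⟩ := hcross
      have hback : s j₀ * (x * t) = x := by
        rw [← hj₀, mul_assoc, inv_mul_cancel_left, mul_assoc, ht.mul_self, mul_one]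
      have hforth : s j₀ * x = x * t := by rw [← hj₀, inv_mul_cancel_right]
      rw [← Equiv.sum_comp (Equiv.swap none (some j₀))]
      refine Finset.sum_le_sum fun a _ => ?_
      rcases a with _ | j
      · simp [hback]
      · by_cases hj : j = j₀
        · simp [hj, hforth]
        · rw [Equiv.swap_apply_of_ne_of_ne (by simp) (by simpa)]
          exact noncrossing j fun h' => hj (cs.simple_injective (h'.symm.trans hj₀))
    · rw [not_exists] at hcross
      refine Finset.sum_le_sum fun a _ => ?_
      rcases a with _ | j
      · simpa using ih h
      · exact noncrossing j (hcross j)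

end LazyWalk

/-- If `ℓ(w * s) > ℓ(w)`, then for every `n` the number of lazy walks of length `n`
from the identity to `w * s` is at most the number of lazy walks of length `n` from
the identity to `w`. -/
theorem lazyWalkCount_mul_simple_le {B W : Type*} [Fintype B] [Group W]
    {M : CoxeterMatrix B} (cs : CoxeterSystem M W) (w : W) (i : B)
    (h : cs.length w < cs.length (w * cs.simple i)) (n : ℕ) :
    lazyWalkCount cs n (w * cs.simple i) ≤ lazyWalkCount cs n w :=
  lazyWalkCount_mul_reflection_le cs (cs.isReflection_simple i) n h
end

section
/- Let (W,S) be a Coxeter system with finite index set B. For every n : ℕ and every w ∈ W, the identity is at least as likely as w for the lazy simple random walk: N n w ≤ N n 1. -/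
open Real

lemma mul_mul_inv_eq_iff {G : Type*} [Group G] (a t x : G) :
    a * t * a⁻¹ = x ↔ t = a⁻¹ * x * a := by
  constructor
  · rintro rfl
    group
  · rintro rfl
    group

section Chebyshev

open Polynomial Polynomial.Chebyshev

lemma Polynomial.Chebyshev.S_eval_two_mul_cos_two_pi_div_eq_zero {m : ℕ} (hm : 3 ≤ m) {t : ℝ}
    (ht : t = 2 * cos (2 * π / m)) :
    (S ℝ ((m - 2) / 2)).eval t * ((S ℝ ((m - 1) / 2)).eval t + (S ℝ ((m - 3) / 2)).eval t) = 0 ∧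
      (S ℝ ((m - 1) / 2)).eval t * ((S ℝ (m / 2)).eval t + (S ℝ ((m - 2) / 2)).eval t) = 0 := by
  have hm0 : (3 : ℝ) ≤ m := by exact_mod_cast hm
  have hsin : sin (2 * π / m) ≠ 0 := by
    refine (sin_pos_of_pos_of_lt_pi (by positivity) ?_).ne'
    rw [div_lt_iff₀ (by linarith)]
    nlinarith [pi_pos]
  have hs (n : ℤ) :
      (S ℝ n).eval t = sin ((n + 1) * (2 * π / m)) / sin (2 * π / m) :=
    eq_div_of_mul_eq hsin (ht ▸ S_two_mul_real_cos _ n)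
  obtain ⟨k, hk | hk⟩ := Nat.even_or_odd' m
  · have hkm : (m : ℝ) = 2 * k := by exact_mod_cast hk
    have hk0 : (k : ℝ) ≠ 0 := Nat.cast_ne_zero.mpr (by omega)
    have hzero : (S ℝ (k - 1)).eval t = 0 := by
      rw [hs, hkm, show ((k - 1 : ℤ) + 1 : ℝ) * (2 * π / (2 * k)) = π by
        field_simp; push_cast; ring, sin_pi, zero_div]
    rw [show ((m : ℤ) - 2) / 2 = k - 1 by omega, show ((m : ℤ) - 1) / 2 = k - 1 by omega,
      hzero]
    simp
  · have hkm : (m : ℝ) = 2 * k + 1 := by exact_mod_cast hk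
    have hzero : (S ℝ k).eval t + (S ℝ (k - 1)).eval t = 0 := by
      rw [hs, hs, ← add_div, hkm, show ((k : ℤ) + 1 : ℝ) * (2 * π / (2 * k + 1))
        = 2 * π - ((k - 1 : ℤ) + 1 : ℝ) * (2 * π / (2 * k + 1)) by field_simp; push_cast; ring,
        sin_two_pi_sub, neg_add_cancel, zero_div]
    rw [show ((m : ℤ) - 2) / 2 = k - 1 by omega, show ((m : ℤ) - 1) / 2 = k by omega,
      show ((m : ℤ) - 3) / 2 = k - 1 by omega, show (m : ℤ) / 2 = k by omega, hzero]
    simp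

lemma Module.reflection_mul_reflection_pow_eq_one_s9 {V : Type*} [AddCommGroup V] [Module ℝ V]
    {x y : V} {f g : Dual ℝ V} (hf : f x = 2) (hg : g y = 2) {m : ℕ} (hm : 2 ≤ m)
    (hfy : f y = -2 * cos (π / m)) (hgx : g x = -2 * cos (π / m)) :
    (reflection hf * reflection hg) ^ m = 1 := by
  ext z
  rw [reflection_mul_reflection_pow_apply hf hg m z, LinearEquiv.coe_one, id]
  rcases hm.eq_or_lt with rfl | hm
  · norm_num [hfy, hgx]
    abel
  · have ht : f y * g x - 2 = 2 * cos (2 * π / m) := by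
      rw [hfy, hgx, mul_div_assoc, cos_two_mul]
      ring
    obtain ⟨h₁, h₂⟩ := S_eval_two_mul_cos_two_pi_div_eq_zero hm ht
    rw [h₁, h₂]
    simp

end Chebyshev

lemma Nat.card_subtype_ofFn_le {α : Type*} [Finite α] {n : ℕ} {p q : List α → Prop}
    (F : List α → List α) (hlen : ∀ l, (F l).length = l.length) (hpq : ∀ l, p l → q (F l))
    (hinj : Set.InjOn F {l | p l}) :
    Nat.card {f : Fin n → α // p (List.ofFn f)} ≤
      Nat.card {f : Fin n → α // q (List.ofFn f)} := by
  have hF (f : Fin n → α) :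
      List.ofFn (fun j : Fin n => (F (List.ofFn f))[j.1]'(by simp [hlen])) = F (List.ofFn f) :=
    List.ext_getElem (by simp [hlen]) fun _ _ _ => List.getElem_ofFn ..
  refine Nat.card_le_card_of_injective
    (fun f => ⟨fun j : Fin n => (F (List.ofFn f.1))[j.1]'(by simp [hlen]),
      hF f.1 ▸ hpq _ f.2⟩) ?_
  intro f g hfg
  have h := congrArg (fun f => List.ofFn f.1) hfg
  simp only [hF] at h
  exact Subtype.ext (List.ofFn_injective (hinj f.2 g.2 h))

namespace CoxeterMatrix

variable {B : Type*} (M : CoxeterMatrix B)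

/-- `2 B(α_k, -)` for the bilinear form `B(α_k, α_l) = -cos (π / M k l)`. When `M k l = 0` the
junk value `π / 0 = 0` gives `B(α_k, α_l) = -1`, which is the right value for an infinite bond. -/
noncomputable def geomCoroot (k : B) : Module.Dual ℝ (B →₀ ℝ) :=
  Finsupp.linearCombination ℝ fun l => -2 * cos (π / M k l)

lemma geomCoroot_single (k l : B) :
    M.geomCoroot k (Finsupp.single l 1) = -2 * cos (π / M k l) := by
  simp [geomCoroot]

lemma geomCoroot_single_self (k : B) : M.geomCoroot k (Finsupp.single k 1) = 2 := by
  simp [geomCoroot_single]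

noncomputable def geomReflection (k : B) : (B →₀ ℝ) ≃ₗ[ℝ] (B →₀ ℝ) :=
  Module.reflection (M.geomCoroot_single_self k)

lemma isLiftable_geomReflection : M.IsLiftable M.geomReflection := by
  intro k l
  rcases eq_or_ne k l with rfl | hkl
  · rw [M.diagonal, pow_one]
    exact mul_eq_one_iff_eq_inv.mpr (Module.reflection_inv _).symm
  rcases Nat.eq_zero_or_pos (M k l) with h0 | hpos
  · rw [h0, pow_zero]
  exact Module.reflection_mul_reflection_pow_eq_one_s9 _ _ (by have := M.off_diagonal k l hkl; omega)
    (M.geomCoroot_single k l) (by rw [geomCoroot_single, M.symmetric])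

lemma geomReflection_single_self (k : B) :
    M.geomReflection k (Finsupp.single k 1) = -Finsupp.single k 1 :=
  Module.reflection_apply_self _

lemma geomReflection_single_apply_of_ne {k l : B} (h : k ≠ l) :
    M.geomReflection l (Finsupp.single k 1) k = 1 := by
  simp [geomReflection, Module.reflection_apply, h]

end CoxeterMatrix

namespace CoxeterSystem

noncomputable section

open scoped Classical

variable {B W : Type*} [Group W] {M : CoxeterMatrix B} (cs : CoxeterSystem M W)

local prefix:100 "s " => cs.simple
local prefix:100 "π " => cs.wordProd
local prefix:100 "ris " => cs.rightInvSeq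
local prefix:100 "lis " => cs.leftInvSeq
local prefix:100 "ℓ" => cs.length

lemma simple_injective_s9 : Function.Injective cs.simple := by
  intro k l hkl
  by_contra hne
  have h := congrArg (fun w => cs.lift ⟨M.geomReflection, M.isLiftable_geomReflection⟩ w
    (Finsupp.single k 1) k) hkl
  simp only [lift_apply_simple, M.geomReflection_single_self,
    M.geomReflection_single_apply_of_ne hne] at h
  norm_num at h

lemma simple_mul_mul_simple_eq_iff (i : B) (x y : W) :
    s i * x * s i = y ↔ x = s i * y * s i := by
  constructor <;> rintro rfl <;> simp [mul_assoc]

def titsPerm (i : B) : Equiv.Perm (W × ZMod 2) :=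
  Function.Involutive.toPerm
    (fun x => (s i * x.1 * s i, x.2 + if x.1 = s i then 1 else 0)) fun x => by
      have h : s i * x.1 * s i = s i ↔ x.1 = s i := by
        rw [simple_mul_mul_simple_eq_iff, simple_mul_simple_self, one_mul]
      ext
      · simp [mul_assoc]
      · simp only [h, add_assoc, CharTwo.add_self_eq_zero, add_zero]

lemma titsPerm_apply (i : B) (t : W) (ε : ZMod 2) :
    cs.titsPerm i (t, ε) = (s i * t * s i, ε + if t = s i then 1 else 0) := rfl

lemma titsPerm_wordProd_apply (ω : List B) (t : W) (ε : ZMod 2) :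
    (ω.map cs.titsPerm).prod (t, ε) = (π ω * t * (π ω)⁻¹, ε + (ris ω).count t) := by
  induction ω generalizing t ε with
  | nil => simp
  | cons i ω ih =>
    rw [List.map_cons, List.prod_cons, Equiv.Perm.mul_apply, ih, titsPerm_apply]
    have h : π ω * t * (π ω)⁻¹ = s i ↔ (π ω)⁻¹ * s i * π ω = t := by
      rw [mul_mul_inv_eq_iff, eq_comm]
    simp only [wordProd_cons, rightInvSeq, List.count_cons, beq_iff_eq, h, mul_inv_rev,
      inv_simple]
    ext
    · simp [mul_assoc]
    · push_cast
      ring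

def dihedralReflection (i j : B) (n : ℕ) : W := (s i * s j)⁻¹ ^ n * s j

lemma dihedralReflection_add_coxeter (i j : B) (n : ℕ) :
    cs.dihedralReflection i j (M i j + n) = cs.dihedralReflection i j n := by
  rw [dihedralReflection, pow_add, inv_pow, simple_mul_simple_pow, inv_one, one_mul,
    dihedralReflection]

lemma conj_dihedralReflection (i j : B) (n k : ℕ) :
    ((s i * s j) ^ k)⁻¹ * cs.dihedralReflection i j n * (s i * s j) ^ k =
      cs.dihedralReflection i j (n + 2 * k) := by
  have hconj : s j * (s i * s j) * (s j)⁻¹ = (s i * s j)⁻¹ := by simp [mul_assoc]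
  have hswap : s j * (s i * s j) ^ k = (s i * s j)⁻¹ ^ k * s j := by
    rw [← hconj, conj_pow, inv_simple, mul_assoc, simple_mul_simple_self, mul_one]
  rw [dihedralReflection, dihedralReflection, mul_assoc, mul_assoc, hswap, ← inv_pow,
    ← mul_assoc, ← mul_assoc, ← pow_add, ← pow_add, show k + n + k = n + 2 * k by ring]

lemma titsPerm_mul_pow_apply (i j : B) (k : ℕ) (t : W) (ε : ZMod 2) :
    ((cs.titsPerm i * cs.titsPerm j) ^ k) (t, ε) =
      ((s i * s j) ^ k * t * ((s i * s j) ^ k)⁻¹,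
        ε + ∑ n ∈ Finset.range (2 * k), if t = cs.dihedralReflection i j n then 1 else 0) := by
  induction k with
  | zero => simp
  | succ k ih =>
    rw [pow_succ', Equiv.Perm.mul_apply, Equiv.Perm.mul_apply, ih, titsPerm_apply, titsPerm_apply]
    have h₁ : (s i * s j) ^ k * t * ((s i * s j) ^ k)⁻¹ = s j ↔
        t = cs.dihedralReflection i j (2 * k) := by
      have h := cs.conj_dihedralReflection i j 0 k
      rw [zero_add, dihedralReflection, pow_zero, one_mul] at h
      rw [mul_mul_inv_eq_iff, h]
    have h₂ : s j * ((s i * s j) ^ k * t * ((s i * s j) ^ k)⁻¹) * s j = s i ↔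
        t = cs.dihedralReflection i j (2 * k + 1) := by
      rw [simple_mul_mul_simple_eq_iff, mul_mul_inv_eq_iff,
        show s j * s i * s j = cs.dihedralReflection i j 1 by
          simp [dihedralReflection, mul_assoc],
        conj_dihedralReflection, add_comm]
    ext
    · simp only [pow_succ', mul_inv_rev, inv_simple]
      group
    · simp only [h₁, h₂, show 2 * (k + 1) = 2 * k + 1 + 1 by ring, Finset.sum_range_succ]
      ring

lemma isLiftable_titsPerm : M.IsLiftable cs.titsPerm := by
  -- `dihedralReflection i j` has period `M i j`, so every reflection occurs an even number of
  -- times among its first `2 * M i j` values.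
  intro i j
  ext ⟨t, ε⟩ : 1
  rw [titsPerm_mul_pow_apply, simple_mul_simple_pow, one_mul, inv_one, mul_one, two_mul,
    Finset.sum_range_add]
  simp only [dihedralReflection_add_coxeter, CharTwo.add_self_eq_zero, add_zero,
    Equiv.Perm.one_apply]

def titsRep : W →* Equiv.Perm (W × ZMod 2) := cs.lift ⟨cs.titsPerm, cs.isLiftable_titsPerm⟩

lemma titsRep_wordProd_apply (ω : List B) (t : W) (ε : ZMod 2) :
    cs.titsRep (π ω) (t, ε) = (π ω * t * (π ω)⁻¹, ε + (ris ω).count t) := by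
  rw [← titsPerm_wordProd_apply, wordProd, map_list_prod, List.map_map]
  congr 3
  ext1 i
  exact cs.lift_apply_simple cs.isLiftable_titsPerm i

-- `titsRep` counts occurrences in right inversion sequences; inverting `w` makes them left ones.
def leftInvParity (t w : W) : ZMod 2 := (cs.titsRep w⁻¹ (t, 0)).2

lemma leftInvParity_wordProd (t : W) (ω : List B) :
    cs.leftInvParity t (π ω) = (lis ω).count t := by
  rw [leftInvParity, ← wordProd_reverse, titsRep_wordProd_apply, rightInvSeq_reverse,
    List.count_reverse, zero_add]

lemma leftInvParity_one (t : W) : cs.leftInvParity t 1 = 0 := by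
  simpa using cs.leftInvParity_wordProd t []

lemma leftInvParity_mul_simple (t w : W) (i : B) :
    cs.leftInvParity t (w * s i) =
      cs.leftInvParity t w + if w * s i * w⁻¹ = t then 1 else 0 := by
  obtain ⟨ω, rfl⟩ := cs.wordProd_surjective w
  have h := cs.leftInvParity_wordProd t (ω.concat i)
  rw [wordProd_concat, leftInvSeq_concat, List.concat_eq_append, List.count_append,
    List.count_singleton] at h
  rw [h, leftInvParity_wordProd]
  push_cast
  simp only [beq_iff_eq]

lemma leftInvParity_simple_mul_self (i : B) (w : W) :
    cs.leftInvParity (s i) (s i * w) = cs.leftInvParity (s i) w + 1 := by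
  obtain ⟨ω, rfl⟩ := cs.wordProd_surjective w
  have h := List.count_map_of_injective (lis ω) _ (MulAut.conj (s i)).injective (s i)
  rw [MulAut.conj_apply, inv_simple, simple_mul_simple_cancel_right] at h
  rw [← wordProd_cons, leftInvParity_wordProd, leftInvParity_wordProd, leftInvSeq,
    List.count_cons, h]
  simp

lemma length_mul_lt_of_leftInvParity_eq_one {t w : W} (h : cs.leftInvParity t w = 1) :
    ℓ (t * w) < ℓ w := by
  obtain ⟨ω, hω, rfl⟩ := cs.exists_isReduced w
  rw [leftInvParity_wordProd] at h
  have hmem : t ∈ lis ω :=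
    List.count_pos_iff.mp (Nat.pos_of_ne_zero fun h0 => by simp [h0] at h)
  exact (cs.isLeftInversion_of_mem_leftInvSeq hω hmem).2

lemma leftInvParity_simple_eq_one {w : W} {i : B} (h : cs.IsLeftDescent w i) :
    cs.leftInvParity (s i) w = 1 := by
  by_contra hw
  have h₁ : cs.leftInvParity (s i) (s i * w) = 1 := by
    have hflip : ∀ x : ZMod 2, x ≠ 1 → x + 1 = 1 := by decide
    rw [leftInvParity_simple_mul_self, hflip _ hw]
  have h₂ := cs.length_mul_lt_of_leftInvParity_eq_one h₁
  rw [simple_mul_simple_cancel_left] at h₂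
  exact (lt_asymm h h₂).elim

def lazyStep (o : Option B) : W := o.elim 1 cs.simple

def lazyProd (l : List (Option B)) : W := (l.map cs.lazyStep).prod

@[simp] lemma lazyProd_nil : cs.lazyProd [] = 1 := rfl

@[simp] lemma lazyProd_cons (o : Option B) (l : List (Option B)) :
    cs.lazyProd (o :: l) = cs.lazyStep o * cs.lazyProd l := List.prod_cons

section Walk

variable (i : B)

/-- `some b` when the wall of `s i` is the `b`-wall of the chamber `u`. -/
def wallLetter (u : W) : Option B :=
  if h : ∃ b, u * s b * u⁻¹ = s i then some h.choose else none

lemma wallLetter_eq_some_iff {u : W} {b : B} :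
    cs.wallLetter i u = some b ↔ u * s b * u⁻¹ = s i := by
  unfold wallLetter
  split_ifs with h
  · rw [Option.some_inj]
    constructor
    · rintro rfl
      exact h.choose_spec
    · intro hb
      exact cs.simple_injective_s9 <| ((mul_mul_inv_eq_iff _ _ _).mp h.choose_spec).trans
        ((mul_mul_inv_eq_iff _ _ _).mp hb).symm
  · simp only [false_iff]
    exact fun hb => h ⟨b, hb⟩

/-- The step `o` from `u` crosses the wall of `s i` or idles next to it. -/
def IsWallStep (u : W) (o : Option B) : Prop :=
  (cs.wallLetter i u).isSome ∧ (o = none ∨ o = cs.wallLetter i u)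

def toggle (u : W) : Option B → Option B
  | none => cs.wallLetter i u
  | some _ => none

lemma lazyStep_toggle {u : W} {o : Option B} (h : cs.IsWallStep i u o) :
    cs.lazyStep (cs.toggle i u o) = u⁻¹ * s i * u * cs.lazyStep o := by
  obtain ⟨hsome, rfl | ho⟩ := h
  · obtain ⟨b, hb⟩ := Option.isSome_iff_exists.mp hsome
    rw [toggle, hb, lazyStep, lazyStep, Option.elim, Option.elim, mul_one,
      ← (mul_mul_inv_eq_iff _ _ _).mp ((cs.wallLetter_eq_some_iff i).mp hb)]
  · obtain ⟨b, hb⟩ := Option.isSome_iff_exists.mp hsome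
    rw [ho, hb, toggle, lazyStep, lazyStep, Option.elim, Option.elim,
      ← (mul_mul_inv_eq_iff _ _ _).mp ((cs.wallLetter_eq_some_iff i).mp hb),
      simple_mul_simple_self]

lemma isWallStep_toggle {u : W} {o : Option B} (h : cs.IsWallStep i u o) :
    cs.IsWallStep i u (cs.toggle i u o) := by
  obtain ⟨hsome, rfl | rfl⟩ := h
  · exact ⟨hsome, Or.inr rfl⟩
  · obtain ⟨b, hb⟩ := Option.isSome_iff_exists.mp hsome
    rw [hb, toggle]
    exact ⟨hsome, Or.inl rfl⟩

lemma toggle_toggle {u : W} {o : Option B} (h : cs.IsWallStep i u o) :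
    cs.toggle i u (cs.toggle i u o) = o := by
  obtain ⟨hsome, rfl | rfl⟩ := h
  · obtain ⟨b, hb⟩ := Option.isSome_iff_exists.mp hsome
    rw [toggle, hb, toggle]
  · obtain ⟨b, hb⟩ := Option.isSome_iff_exists.mp hsome
    rw [hb, toggle, toggle, hb]

def toggleFirstWallStep : W → List (Option B) → List (Option B)
  | _, [] => []
  | u, o :: l => if cs.IsWallStep i u o then cs.toggle i u o :: l
      else o :: toggleFirstWallStep (u * cs.lazyStep o) l

def HasWallStep : W → List (Option B) → Prop
  | _, [] => False
  | u, o :: l => cs.IsWallStep i u o ∨ HasWallStep (u * cs.lazyStep o) l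

lemma length_toggleFirstWallStep (u : W) (l : List (Option B)) :
    (cs.toggleFirstWallStep i u l).length = l.length := by
  induction l generalizing u with
  | nil => rfl
  | cons o l ih =>
    rw [toggleFirstWallStep]
    split_ifs <;> simp [ih]

lemma lazyProd_toggleFirstWallStep {u : W} {l : List (Option B)}
    (h : cs.HasWallStep i u l) :
    cs.lazyProd (cs.toggleFirstWallStep i u l) = u⁻¹ * s i * u * cs.lazyProd l := by
  induction l generalizing u with
  | nil => exact h.elim
  | cons o l ih =>
    rw [toggleFirstWallStep]
    split_ifs with ho
    · rw [lazyProd_cons, lazyProd_cons, lazyStep_toggle cs i ho, mul_assoc]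
    · rw [lazyProd_cons, lazyProd_cons, ih (h.resolve_left ho)]
      group

lemma toggleFirstWallStep_toggleFirstWallStep {u : W} {l : List (Option B)}
    (h : cs.HasWallStep i u l) :
    cs.toggleFirstWallStep i u (cs.toggleFirstWallStep i u l) = l := by
  induction l generalizing u with
  | nil => exact h.elim
  | cons o l ih =>
    rw [toggleFirstWallStep]
    split_ifs with ho
    · rw [toggleFirstWallStep, if_pos (cs.isWallStep_toggle i ho), toggle_toggle cs i ho]
    · rw [toggleFirstWallStep, if_neg ho, ih (h.resolve_left ho)]

lemma hasWallStep_of_leftInvParity_ne {u : W} {l : List (Option B)}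
    (h : cs.leftInvParity (s i) u ≠ cs.leftInvParity (s i) (u * cs.lazyProd l)) :
    cs.HasWallStep i u l := by
  induction l generalizing u with
  | nil => simp at h
  | cons o l ih =>
    rw [lazyProd_cons, ← mul_assoc] at h
    by_cases hstep : cs.leftInvParity (s i) u = cs.leftInvParity (s i) (u * cs.lazyStep o)
    · exact Or.inr (ih (hstep ▸ h))
    · left
      cases o with
      | none => simp [lazyStep] at hstep
      | some b =>
        have hb : u * s b * u⁻¹ = s i := by
          by_contra hb
          simp [lazyStep, leftInvParity_mul_simple, hb] at hstep
        have hw := (cs.wallLetter_eq_some_iff i).mpr hb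
        exact ⟨by simp [hw], Or.inr hw.symm⟩

end Walk

lemma lazyWalkCount_eq (n : ℕ) (w : W) :
    lazyWalkCount cs n w =
      Nat.card {f : Fin n → Option B // cs.lazyProd (List.ofFn f) = w} := by
  simp only [lazyWalkCount, lazyProd, List.map_ofFn]
  rfl

lemma lazyWalkCount_le_simple_mul [Finite B] {w : W} {i : B} (h : cs.IsLeftDescent w i)
    (n : ℕ) : lazyWalkCount cs n w ≤ lazyWalkCount cs n (s i * w) := by
  have hwall {l : List (Option B)} (hl : cs.lazyProd l = w) : cs.HasWallStep i 1 l := by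
    refine cs.hasWallStep_of_leftInvParity_ne i ?_
    rw [one_mul, hl, leftInvParity_one, cs.leftInvParity_simple_eq_one h]
    decide
  rw [lazyWalkCount_eq, lazyWalkCount_eq]
  refine Nat.card_subtype_ofFn_le (p := (cs.lazyProd · = w)) (q := (cs.lazyProd · = s i * w))
    (cs.toggleFirstWallStep i 1) (cs.length_toggleFirstWallStep i 1) (fun l hl => ?_)
    fun l₁ hl₁ l₂ hl₂ heq => ?_
  · rw [lazyProd_toggleFirstWallStep cs i (hwall hl), hl]
    group
  · rw [← cs.toggleFirstWallStep_toggleFirstWallStep i (hwall hl₁), heq,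
      cs.toggleFirstWallStep_toggleFirstWallStep i (hwall hl₂)]

end

end CoxeterSystem

/-- For the lazy simple random walk on a Coxeter group, the identity is the most
likely element after any number of steps. -/
theorem lazyWalkCount_le_one {B W : Type*} [Fintype B] [Group W]
    {M : CoxeterMatrix B} (cs : CoxeterSystem M W) (n : ℕ) (w : W) :
    lazyWalkCount cs n w ≤ lazyWalkCount cs n 1 := by
  induction hk : cs.length w using Nat.strong_induction_on generalizing w with
  | _ k ih =>
    by_cases hw : w = 1
    · rw [hw]
    obtain ⟨i, hi⟩ := cs.exists_leftDescent_of_ne_one hw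
    exact (cs.lazyWalkCount_le_simple_mul hi n).trans (ih _ (hk ▸ hi) _ rfl)
end
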